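/- arXiv:2102.07404 — 2 statements merged into one kernel-verified Lean document; each statement's English description precedes it below -/
import Mathlib

section
/- Variance estimator deviation bound (Lemma A.2): in a finite linear mixture Markov game, fix h ∈ {1,…,H}, a triple (s,a,b), a function V : S → ℝ with |V(s')| ≤ H for all s', vectors θ̂₀, θ̂₁ ∈ ℝ^d, and positive definite matrices Σ₀, Σ₁ ∈ ℝ^{d×d}. Define the true conditional variance 𝕍_h V(s,a,b) = [P_h V²](s,a,b) − ([P_h V](s,a,b))² and the estimate 𝕍^est = clip_{[0,H²]}(⟨φ_{V²}(s,a,b), θ̂₁⟩) − (clip_{[−H,H]}(⟨φ_V(s,a,b), θ̂₀⟩))². Then |𝕍^est − 𝕍_h V(s,a,b)| ≤ min{H², ‖φ_{V²}(s,a,b)‖_{Σ₁⁻¹} · ‖θ̂₁ − θ*_h‖_{Σ₁}} + min{H², 2H · ‖φ_V(s,a,b)‖_{Σ₀⁻¹} · ‖θ̂₀ − θ*_h‖_{Σ₀}}. -/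
open BigOperators Finset Matrix

/-- Projection of `x : ℝ` onto the interval `[l, u]`. -/
noncomputable def clip (l u x : ℝ) : ℝ := max l (min x u)

/-- Weighted (semi-)norm `‖x‖_M = √(xᵀ M x)`. -/
noncomputable def wnorm {d : ℕ} (M : Matrix (Fin d) (Fin d) ℝ) (x : Fin d → ℝ) : ℝ :=
  Real.sqrt (x ⬝ᵥ M.mulVec x)

/-- Validity of the data of a finite two-player zero-sum Markov game:
rewards in `[-1,1]` and transition kernels that are probability mass functions. -/
def IsGame {S A B : Type*} [Fintype S]
    (r : ℕ → S → A → B → ℝ) (P : ℕ → S → A → B → S → ℝ) : Prop :=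
  (∀ h s a b, -1 ≤ r h s a b ∧ r h s a b ≤ 1) ∧
  (∀ h s a b, (∀ s', 0 ≤ P h s a b s') ∧ ∑ s', P h s a b s' = 1)

/-! The two true moments are linear in `θ*_h`, `[P_h V](s,a,b) = ⟨φ_V, θ*_h⟩` and
`[P_h V²](s,a,b) = ⟨φ_{V²}, θ*_h⟩`, and as averages under `P_h` they lie in `[-H, H]` and
`[0, H²]`. Clipping onto an interval that contains the target never increases the error and
caps it by the length of the interval; the unclipped errors are bounded by the elliptical
Cauchy–Schwarz inequality `|⟨x, y⟩| ≤ ‖x‖_{Σ⁻¹} ‖y‖_Σ`, and the squared first moment is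
handled by `c² - t² = (c + t)(c - t)` with `|c + t| ≤ 2H`. -/

section Clip

variable {l u t : ℝ}

lemma clip_mem_Icc (hlu : l ≤ u) (x : ℝ) : clip l u x ∈ Set.Icc l u :=
  ⟨le_max_left _ _, max_le hlu (min_le_right _ _)⟩

lemma clip_eq_self (ht : t ∈ Set.Icc l u) : clip l u t = t := by
  simp [clip, ht.1, ht.2]

lemma abs_clip_sub_le (ht : t ∈ Set.Icc l u) (x : ℝ) : |clip l u x - t| ≤ |x - t| := by
  -- `clip l u` is 1-Lipschitz and fixes `t`.
  conv_lhs => rw [← clip_eq_self ht]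
  unfold clip
  rw [max_comm l, max_comm l]
  exact (abs_max_sub_max_le_abs _ _ _).trans ((abs_min_sub_min_le_max x u t u).trans (by simp))

lemma abs_clip_sub_le_min (ht : t ∈ Set.Icc l u) (x : ℝ) :
    |clip l u x - t| ≤ min (u - l) |x - t| :=
  le_min (Real.dist_le_of_mem_Icc (clip_mem_Icc (ht.1.trans ht.2) x) ht)
    (abs_clip_sub_le ht x)

end Clip

lemma sq_mem_Icc {H y : ℝ} (hy : y ∈ Set.Icc (-H) H) : y ^ 2 ∈ Set.Icc 0 (H ^ 2) :=
  ⟨sq_nonneg y, sq_le_sq' hy.1 hy.2⟩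

lemma abs_sq_sub_sq_le_min {H c t : ℝ} (hc : c ∈ Set.Icc (-H) H) (ht : t ∈ Set.Icc (-H) H) :
    |c ^ 2 - t ^ 2| ≤ min (H ^ 2) (2 * H * |c - t|) := by
  refine le_min ?_ ?_
  · simpa [Real.dist_eq] using Real.dist_le_of_mem_Icc (sq_mem_Icc hc) (sq_mem_Icc ht)
  · rw [sq_sub_sq, abs_mul]
    have : |c + t| ≤ 2 * H := abs_le.2 ⟨by linarith [hc.1, ht.1], by linarith [hc.2, ht.2]⟩
    exact mul_le_mul_of_nonneg_right this (abs_nonneg _)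

lemma abs_dotProduct_le_wnorm_mul_wnorm {d : ℕ} {M : Matrix (Fin d) (Fin d) ℝ}
    (hM : M.PosSemidef) (x y : Fin d → ℝ) : |x ⬝ᵥ M *ᵥ y| ≤ wnorm M x * wnorm M y := by
  let := M.toSeminormedAddCommGroup hM
  let := M.toInnerProductSpace hM
  convert abs_real_inner_le_norm x y using 2
  · show _ = (M *ᵥ y) ⬝ᵥ star x
    simp [dotProduct_comm]
  all_goals
    show _ = Real.sqrt (RCLike.re ((M *ᵥ _) ⬝ᵥ star _))
    simp [wnorm, dotProduct_comm]

lemma abs_dotProduct_le_wnorm_inv_mul_wnorm {d : ℕ} {M : Matrix (Fin d) (Fin d) ℝ}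
    (hM : M.PosDef) (x y : Fin d → ℝ) : |x ⬝ᵥ y| ≤ wnorm M⁻¹ x * wnorm M y := by
  have hinv : M * M⁻¹ = 1 := M.mul_nonsing_inv (isUnit_iff_ne_zero.mpr hM.det_pos.ne')
  have hsymm : Mᵀ = M := by
    simpa [Matrix.conjTranspose_eq_transpose_of_trivial] using hM.isHermitian.eq
  have hx : M *ᵥ (M⁻¹ *ᵥ x) = x := by rw [mulVec_mulVec, hinv, one_mulVec]
  have hdot : x ⬝ᵥ y = M⁻¹ *ᵥ x ⬝ᵥ M *ᵥ y := by
    rw [dotProduct_mulVec, ← mulVec_transpose, hsymm, hx]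
  have hwnorm : wnorm M (M⁻¹ *ᵥ x) = wnorm M⁻¹ x := by rw [wnorm, wnorm, hx, dotProduct_comm]
  rw [hdot, ← hwnorm]
  exact abs_dotProduct_le_wnorm_mul_wnorm hM.posSemidef _ _

lemma sum_mul_mem_Icc_of_sum_eq_one {ι : Type*} [Fintype ι] {w f : ι → ℝ} {l u : ℝ}
    (hw₀ : ∀ i, 0 ≤ w i) (hw₁ : ∑ i, w i = 1) (hf : ∀ i, f i ∈ Set.Icc l u) :
    ∑ i, w i * f i ∈ Set.Icc l u :=
  (convex_Icc l u).sum_mem (fun i _ => hw₀ i) hw₁ (fun i _ => hf i)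

lemma sum_mul_eq_sum_smul_dotProduct {ι : Type*} [Fintype ι] {d : ℕ} {p : ι → ℝ}
    {φ : ι → Fin d → ℝ} {θ : Fin d → ℝ} (hp : ∀ i, p i = φ i ⬝ᵥ θ) (f : ι → ℝ) :
    ∑ i, p i * f i = (∑ i, f i • φ i) ⬝ᵥ θ := by
  simp [sum_dotProduct, hp, mul_comm]

lemma abs_clip_sub_clip_sq_sub_le {H x₁ x₀ t₁ t₀ e₁ e₀ : ℝ}
    (ht₁ : t₁ ∈ Set.Icc 0 (H ^ 2)) (ht₀ : t₀ ∈ Set.Icc (-H) H)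
    (hx₁ : |x₁ - t₁| ≤ e₁) (hx₀ : |x₀ - t₀| ≤ e₀) :
    |(clip 0 (H ^ 2) x₁ - clip (-H) H x₀ ^ 2) - (t₁ - t₀ ^ 2)|
      ≤ min (H ^ 2) e₁ + min (H ^ 2) (2 * H * e₀) := by
  have hH : 0 ≤ H := by linarith [ht₀.1, ht₀.2]
  have hc₀ := clip_mem_Icc (neg_le_self hH) x₀
  calc |(clip 0 (H ^ 2) x₁ - clip (-H) H x₀ ^ 2) - (t₁ - t₀ ^ 2)|
      = |(clip 0 (H ^ 2) x₁ - t₁) - (clip (-H) H x₀ ^ 2 - t₀ ^ 2)| := by ring_nf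
    _ ≤ |clip 0 (H ^ 2) x₁ - t₁| + |clip (-H) H x₀ ^ 2 - t₀ ^ 2| := abs_sub _ _
    _ ≤ min (H ^ 2) e₁ + min (H ^ 2) (2 * H * e₀) := by
      gcongr
      · simpa using (abs_clip_sub_le_min ht₁ x₁).trans (min_le_min_left _ hx₁)
      · refine (abs_sq_sub_sq_le_min hc₀ ht₀).trans (min_le_min_left _ ?_)
        gcongr
        exact (abs_clip_sub_le ht₀ x₀).trans hx₀

theorem variance_estimator_bound_general
    {S A B : Type*} [Fintype S] {d : ℕ}
    (H : ℕ)
    (r : ℕ → S → A → B → ℝ) (P : ℕ → S → A → B → S → ℝ)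
    (hGame : IsGame r P)
    (φ : S → A → B → S → Fin d → ℝ) (θs : ℕ → Fin d → ℝ)
    (hmix : ∀ h s a b s', P h s a b s' = φ s a b s' ⬝ᵥ θs h)
    (h : ℕ)
    (s : S) (a : A) (b : B)
    (V : S → ℝ) (hV : ∀ s', |V s'| ≤ (H : ℝ))
    (θ0 θ1 : Fin d → ℝ)
    (Sg0 Sg1 : Matrix (Fin d) (Fin d) ℝ) (hSg0 : Sg0.PosDef) (hSg1 : Sg1.PosDef) :
    |(clip 0 ((H : ℝ)^2) ((∑ s', (V s')^2 • φ s a b s') ⬝ᵥ θ1)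
        - (clip (-(H : ℝ)) H ((∑ s', V s' • φ s a b s') ⬝ᵥ θ0))^2)
      - ((∑ s', P h s a b s' * (V s')^2) - (∑ s', P h s a b s' * V s')^2)|
    ≤ min ((H : ℝ)^2)
        (wnorm Sg1⁻¹ (∑ s', (V s')^2 • φ s a b s') * wnorm Sg1 (θ1 - θs h))
      + min ((H : ℝ)^2)
        (2 * (H : ℝ) * (wnorm Sg0⁻¹ (∑ s', V s' • φ s a b s') * wnorm Sg0 (θ0 - θs h))) := by
  obtain ⟨hP₀, hP₁⟩ := hGame.2 h s a b
  have hV' : ∀ s', V s' ∈ Set.Icc (-(H : ℝ)) H := fun s' => abs_le.1 (hV s')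
  have hmean := sum_mul_eq_sum_smul_dotProduct (hmix h s a b)
  apply abs_clip_sub_clip_sq_sub_le
    (sum_mul_mem_Icc_of_sum_eq_one hP₀ hP₁ fun s' => sq_mem_Icc (hV' s'))
    (sum_mul_mem_Icc_of_sum_eq_one hP₀ hP₁ hV')
  · rw [hmean, ← dotProduct_sub]
    exact abs_dotProduct_le_wnorm_inv_mul_wnorm hSg1 _ _
  · rw [hmean, ← dotProduct_sub]
    exact abs_dotProduct_le_wnorm_inv_mul_wnorm hSg0 _ _

/-- Variance estimator deviation bound (Lemma A.2): in a finite `d`-dimensional linear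
mixture Markov game, the clipped variance estimator built from `θ̂₀, θ̂₁` deviates from the
true one-step conditional variance of `V` by at most the two elliptical error terms. -/
theorem variance_estimator_bound
    {S A B : Type*} [Fintype S] [Fintype A] [Fintype B] {d : ℕ}
    (H : ℕ) (hH : 1 ≤ H)
    (r : ℕ → S → A → B → ℝ) (P : ℕ → S → A → B → S → ℝ)
    (hGame : IsGame r P)
    (φ : S → A → B → S → Fin d → ℝ) (θs : ℕ → Fin d → ℝ)
    (hmix : ∀ h s a b s', P h s a b s' = φ s a b s' ⬝ᵥ θs h)
    (h : ℕ) (hh1 : 1 ≤ h) (hh2 : h ≤ H)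
    (s : S) (a : A) (b : B)
    (V : S → ℝ) (hV : ∀ s', |V s'| ≤ (H : ℝ))
    (θ0 θ1 : Fin d → ℝ)
    (Sg0 Sg1 : Matrix (Fin d) (Fin d) ℝ) (hSg0 : Sg0.PosDef) (hSg1 : Sg1.PosDef) :
    |(clip 0 ((H : ℝ)^2) ((∑ s', (V s')^2 • φ s a b s') ⬝ᵥ θ1)
        - (clip (-(H : ℝ)) H ((∑ s', V s' • φ s a b s') ⬝ᵥ θ0))^2)
      - ((∑ s', P h s a b s' * (V s')^2) - (∑ s', P h s a b s' * V s')^2)|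
    ≤ min ((H : ℝ)^2)
        (wnorm Sg1⁻¹ (∑ s', (V s')^2 • φ s a b s') * wnorm Sg1 (θ1 - θs h))
      + min ((H : ℝ)^2)
        (2 * (H : ℝ) * (wnorm Sg0⁻¹ (∑ s', V s' • φ s a b s') * wnorm Sg0 (θ0 - θs h))) :=
  variance_estimator_bound_general H r P hGame φ θs hmix h s a b V hV θ0 θ1 Sg0 Sg1 hSg0 hSg1
end

section
/- Elliptical potential lemma (Lemma D.2): for any vectors x_1, …, x_T ∈ ℝ^d with ‖x_t‖₂ ≤ L for all t, define A_0 = λ I_d and A_t = A_0 + Σ_{i=1}^t x_i x_iᵀ (where λ > 0). Then Σ_{t=1}^T min{1, x_tᵀ A_{t−1}⁻¹ x_t} ≤ 2 d log( (dλ + T L²) / (dλ) ). -/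
/-!
By the matrix determinant lemma, `det A_t = det A_{t-1} * (1 + x_tᵀ A_{t-1}⁻¹ x_t)`, so the
product of the factors `1 + x_tᵀ A_{t-1}⁻¹ x_t` is `det A_T / λ^d`. AM–GM on the eigenvalues of
`A_T` gives `det A_T ≤ (tr A_T / d)^d ≤ ((dλ + T L²) / d)^d`. Taking logarithms and using
`min 1 u ≤ 2 log (1 + u)` for `u ≥ 0` yields the bound.
-/

open BigOperators Finset Matrix

theorem Matrix.det_add_vecMulVec {m α : Type*} [Fintype m] [DecidableEq m] [CommRing α]
    {A : Matrix m m α} (hA : IsUnit A.det) (u v : m → α) :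
    (A + vecMulVec u v).det = A.det * (1 + v ⬝ᵥ A⁻¹ *ᵥ u) := by
  rw [vecMulVec_eq Unit, det_add_replicateCol_mul_replicateRow hA, det_unique (n := Unit),
    Matrix.mul_assoc, ← replicateCol_mulVec]
  simp [replicateRow_mul_replicateCol_apply]

theorem Real.prod_le_sum_div_card_pow {ι : Type*} (s : Finset ι) {z : ι → ℝ}
    (hz : ∀ i ∈ s, 0 ≤ z i) : ∏ i ∈ s, z i ≤ ((∑ i ∈ s, z i) / #s) ^ #s := by
  rcases s.eq_empty_or_nonempty with rfl | hs
  · simp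
  have amgm := Real.geom_mean_le_arith_mean s (fun _ => 1) z (fun _ _ => zero_le_one)
    (by simpa using hs) hz
  simp only [Real.rpow_one, sum_const, nsmul_eq_mul, mul_one, one_mul] at amgm
  calc ∏ i ∈ s, z i = ((∏ i ∈ s, z i) ^ ((#s : ℝ)⁻¹)) ^ #s :=
        (Real.rpow_inv_natCast_pow (prod_nonneg hz) hs.card_ne_zero).symm
    _ ≤ ((∑ i ∈ s, z i) / #s) ^ #s := by
        have hprod_nonneg := prod_nonneg hz
        gcongr

theorem Matrix.PosSemidef.det_le_trace_div_card_pow {n : Type*} [Fintype n] [DecidableEq n]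
    {A : Matrix n n ℝ} (hA : A.PosSemidef) :
    A.det ≤ (A.trace / Fintype.card n) ^ Fintype.card n := by
  rw [hA.isHermitian.det_eq_prod_eigenvalues, hA.isHermitian.trace_eq_sum_eigenvalues]
  simpa using Real.prod_le_sum_div_card_pow univ fun i _ => hA.eigenvalues_nonneg i

theorem min_one_le_two_mul_log_one_add {u : ℝ} (hu : 0 ≤ u) :
    min 1 u ≤ 2 * Real.log (1 + u) := by
  have hpos : 0 < 1 + u := by linarith
  have hlog : u / (1 + u) ≤ Real.log (1 + u) := by
    have heq : u / (1 + u) = 1 - (1 + u)⁻¹ := by field_simp; ring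
    exact heq ▸ Real.one_sub_inv_le_log_of_pos hpos
  have hmin : min 1 u * (1 + u) ≤ 2 * u := by
    rcases le_total u 1 with h | h
    · rw [min_eq_right h]; nlinarith
    · rw [min_eq_left h]; linarith
  calc min 1 u ≤ 2 * (u / (1 + u)) := by rw [mul_div_assoc', le_div_iff₀ hpos]; exact hmin
    _ ≤ 2 * Real.log (1 + u) := by gcongr

section RankOneUpdates

variable {n : Type*} [Fintype n] {A : ℕ → Matrix n n ℝ} {x : ℕ → n → ℝ}

theorem posDef_of_add_vecMulVec (hA : ∀ t, A (t + 1) = A t + vecMulVec (x (t + 1)) (x (t + 1)))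
    (h0 : (A 0).PosDef) (t : ℕ) : (A t).PosDef := by
  induction t with
  | zero => exact h0
  | succ t ih =>
    rw [hA t]
    simpa using ih.add_posSemidef (posSemidef_vecMulVec_self_star (x (t + 1)))

theorem det_eq_det_zero_mul_prod_of_add_vecMulVec [DecidableEq n]
    (hA : ∀ t, A (t + 1) = A t + vecMulVec (x (t + 1)) (x (t + 1))) (h0 : (A 0).PosDef)
    (T : ℕ) :
    (A T).det = (A 0).det * ∏ t ∈ Icc 1 T, (1 + x t ⬝ᵥ (A (t - 1))⁻¹ *ᵥ x t) := by
  induction T with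
  | zero => simp
  | succ T ih =>
    have hunit : IsUnit (A T).det :=
      (isUnit_iff_isUnit_det _).mp (posDef_of_add_vecMulVec hA h0 T).isUnit
    rw [hA T, det_add_vecMulVec hunit, ih, prod_Icc_succ_top (Nat.le_add_left 1 T),
      Nat.add_sub_cancel, mul_assoc]

theorem trace_eq_trace_zero_add_sum_of_add_vecMulVec
    (hA : ∀ t, A (t + 1) = A t + vecMulVec (x (t + 1)) (x (t + 1))) (T : ℕ) :
    (A T).trace = (A 0).trace + ∑ t ∈ Icc 1 T, x t ⬝ᵥ x t := by
  induction T with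
  | zero => simp
  | succ T ih =>
    rw [hA T, trace_add, trace_vecMulVec, ih, sum_Icc_succ_top (Nat.le_add_left 1 T), add_assoc]

theorem prod_one_add_le_of_add_vecMulVec [DecidableEq n]
    (hA : ∀ t, A (t + 1) = A t + vecMulVec (x (t + 1)) (x (t + 1)))
    {lam : ℝ} (hlam : 0 < lam) (h0 : A 0 = lam • 1) {T : ℕ} {B : ℝ}
    (hB : ∑ t ∈ Icc 1 T, x t ⬝ᵥ x t ≤ B) :
    ∏ t ∈ Icc 1 T, (1 + x t ⬝ᵥ (A (t - 1))⁻¹ *ᵥ x t)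
      ≤ ((Fintype.card n * lam + B) / (Fintype.card n * lam)) ^ Fintype.card n := by
  have h0_pos : (A 0).PosDef := h0 ▸ PosDef.one.smul hlam
  have hpos := posDef_of_add_vecMulVec hA h0_pos T
  have hdet := det_eq_det_zero_mul_prod_of_add_vecMulVec hA h0_pos T
  have htr := trace_eq_trace_zero_add_sum_of_add_vecMulVec hA T
  rw [h0, det_smul, det_one, mul_one] at hdet
  rw [h0, trace_smul, trace_one, smul_eq_mul, mul_comm] at htr
  have hdet_le :
      lam ^ Fintype.card n * ∏ t ∈ Icc 1 T, (1 + x t ⬝ᵥ (A (t - 1))⁻¹ *ᵥ x t) ≤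
        ((Fintype.card n * lam + B) / Fintype.card n) ^ Fintype.card n := by
    rw [← hdet]
    refine hpos.posSemidef.det_le_trace_div_card_pow.trans ?_
    have htr_nonneg := hpos.posSemidef.trace_nonneg
    gcongr
    linarith
  rwa [div_mul_eq_div_div, div_pow, le_div_iff₀ (by positivity), mul_comm]

end RankOneUpdates

theorem elliptical_potential_general
    {d T : ℕ}
    (lam L : ℝ) (hlam : 0 < lam)
    (x : ℕ → Fin d → ℝ)
    (hx : ∀ t, 1 ≤ t → t ≤ T → Real.sqrt (x t ⬝ᵥ x t) ≤ L)
    (Amat : ℕ → Matrix (Fin d) (Fin d) ℝ)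
    (hA0 : Amat 0 = lam • (1 : Matrix (Fin d) (Fin d) ℝ))
    (hA : ∀ t, Amat (t + 1) = Amat t + Matrix.vecMulVec (x (t + 1)) (x (t + 1))) :
    ∑ t ∈ Finset.Icc 1 T, min 1 (x t ⬝ᵥ (Amat (t - 1))⁻¹.mulVec (x t))
      ≤ 2 * d * Real.log ((d * lam + T * L ^ 2) / (d * lam)) := by
  have hpos := posDef_of_add_vecMulVec hA (hA0 ▸ PosDef.one.smul hlam)
  have hquad (t : ℕ) : 0 ≤ x t ⬝ᵥ (Amat (t - 1))⁻¹ *ᵥ x t :=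
    (hpos (t - 1)).inv.posSemidef.dotProduct_mulVec_nonneg (x t)
  have hsum : ∑ t ∈ Icc 1 T, x t ⬝ᵥ x t ≤ T * L ^ 2 := by
    have hle : ∀ t ∈ Icc 1 T, x t ⬝ᵥ x t ≤ L ^ 2 := fun t ht =>
      (Real.sqrt_le_iff.mp (hx t (mem_Icc.mp ht).1 (mem_Icc.mp ht).2)).2
    simpa using sum_le_card_nsmul _ _ _ hle
  have hprod := prod_one_add_le_of_add_vecMulVec hA hlam hA0 hsum
  rw [Fintype.card_fin] at hprod
  calc ∑ t ∈ Icc 1 T, min 1 (x t ⬝ᵥ (Amat (t - 1))⁻¹ *ᵥ x t)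
      ≤ ∑ t ∈ Icc 1 T, 2 * Real.log (1 + x t ⬝ᵥ (Amat (t - 1))⁻¹ *ᵥ x t) :=
        sum_le_sum fun t _ => min_one_le_two_mul_log_one_add (hquad t)
    _ = 2 * Real.log (∏ t ∈ Icc 1 T, (1 + x t ⬝ᵥ (Amat (t - 1))⁻¹ *ᵥ x t)) := by
        rw [← mul_sum, Real.log_prod fun t _ => by linarith [hquad t]]
    _ ≤ 2 * Real.log (((d * lam + T * L ^ 2) / (d * lam)) ^ d) := by
        gcongr
        exact prod_pos fun t _ => by linarith [hquad t]
    _ = 2 * d * Real.log ((d * lam + T * L ^ 2) / (d * lam)) := by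
        rw [Real.log_pow, mul_assoc]

/-- Elliptical potential lemma (Lemma D.2): for vectors `x_1, …, x_T` with `‖x_t‖₂ ≤ L`,
`A_0 = λI` and `A_t = A_{t-1} + x_t x_tᵀ`, one has
`Σ_{t=1}^T min{1, ‖x_t‖²_{A_{t-1}⁻¹}} ≤ 2d log((dλ + TL²)/(dλ))`. -/
theorem elliptical_potential
    {d T : ℕ} (hd : 1 ≤ d)
    (lam L : ℝ) (hlam : 0 < lam) (hL : 0 < L)
    (x : ℕ → Fin d → ℝ)
    (hx : ∀ t, 1 ≤ t → t ≤ T → Real.sqrt (x t ⬝ᵥ x t) ≤ L)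
    (Amat : ℕ → Matrix (Fin d) (Fin d) ℝ)
    (hA0 : Amat 0 = lam • (1 : Matrix (Fin d) (Fin d) ℝ))
    (hA : ∀ t, Amat (t + 1) = Amat t + Matrix.vecMulVec (x (t + 1)) (x (t + 1))) :
    ∑ t ∈ Finset.Icc 1 T, min 1 (x t ⬝ᵥ (Amat (t - 1))⁻¹.mulVec (x t))
      ≤ 2 * d * Real.log ((d * lam + T * L ^ 2) / (d * lam)) :=
  elliptical_potential_general lam L hlam x hx Amat hA0 hA
end
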